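/- Let S ⊆ T be two markings on a category C, let F : C ⥤ Type u be an S-cosheaf, let C be an object of C and let g : D ⟶ C be a morphism belonging to T. Suppose e : E₀ ⟶ E is a morphism of S over C (i.e. equipped with compatible morphisms E₀ ⟶ C and E ⟶ C) such that for every n ≥ 0 the (n+1)-fold fibre power E_n = E₀ ×_E ⋯ ×_E E₀ satisfies: the canonical map F(E_n ×_C D) ⟶ F(E_n) ×_{F(C)} F(D) is a bijection. Then the canonical map F(E ×_C D) ⟶ F(E) ×_{F(C)} F(D) is a bijection. In other words, the full subcategory of the slice category C_{/C} spanned by those E ⟶ C for which F commutes with the pullback against g is downward closed. -/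

import Mathlib

open CategoryTheory Limits

universe w v u

variable {C : Type u} [Category.{v} C]

/-- A *marking* on a category `C`: a class of morphisms containing all isomorphisms,
stable under composition, such that pullbacks along its members exist and it is
stable under such pullbacks. -/
structure Marking (S : MorphismProperty C) : Prop where
  of_isIso : ∀ {X Y : C} (f : X ⟶ Y), IsIso f → S f
  comp_mem : ∀ {X Y Z : C} {f : X ⟶ Y} {g : Y ⟶ Z}, S f → S g → S (f ≫ g)
  hasPullback : ∀ {X Y Z : C} (s : X ⟶ Z) (g : Y ⟶ Z), S s → HasPullback s g
  snd_mem : ∀ {X Y Z : C} (s : X ⟶ Z) (g : Y ⟶ Z) (hs : S s),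
    letI := hasPullback s g hs
    S (pullback.snd s g)

/-- The iterated fibre powers of a morphism `s : C₀ ⟶ X` of a marking,
together with their projections to `X`, which again belong to the marking:
`fibrePowerAux n` is the `(n+1)`-fold fibre power `C₀ ×_X ⋯ ×_X C₀`. -/
noncomputable def Marking.fibrePowerAux {S : MorphismProperty C} (hS : Marking S)
    {C₀ X : C} (s : C₀ ⟶ X) (hs : S s) : (n : ℕ) → Σ' (Z : C) (p : Z ⟶ X), S p
  | 0 => ⟨C₀, s, hs⟩
  | n + 1 =>
    let prev := hS.fibrePowerAux s hs n
    letI := hS.hasPullback prev.2.1 s prev.2.2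
    ⟨pullback prev.2.1 s, pullback.snd prev.2.1 s ≫ s,
      hS.comp_mem (hS.snd_mem prev.2.1 s prev.2.2) hs⟩

/-- The `(n+1)`-fold fibre power `C₀ ×_X ⋯ ×_X C₀` of a morphism `s : C₀ ⟶ X`
belonging to a marking. -/
noncomputable def Marking.fibrePower {S : MorphismProperty C} (hS : Marking S)
    {C₀ X : C} (s : C₀ ⟶ X) (hs : S s) (n : ℕ) : C :=
  (hS.fibrePowerAux s hs n).1

/-- The projection from the `(n+1)`-fold fibre power of `s : C₀ ⟶ X` to the base `X`. -/
noncomputable def Marking.fibrePowerHom {S : MorphismProperty C} (hS : Marking S)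
    {C₀ X : C} (s : C₀ ⟶ X) (hs : S s) (n : ℕ) : hS.fibrePower s hs n ⟶ X :=
  (hS.fibrePowerAux s hs n).2.1

/-- A full subcategory (given by a predicate `P` on objects) is *downward closed*
with respect to a marking `S` if whenever `s : C₀ ⟶ X` belongs to `S` and all the
iterated fibre powers `C₀ ×_X ⋯ ×_X C₀` satisfy `P`, then so does `X`. -/
def DownwardClosed {S : MorphismProperty C} (hS : Marking S) (P : C → Prop) : Prop :=
  ∀ {C₀ X : C} (s : C₀ ⟶ X) (hs : S s), (∀ n : ℕ, P (hS.fibrePower s hs n)) → P X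

/-- A full subcategory (given by a predicate `P` on objects) is *generating* with
respect to a marking `S` if it is closed under pullbacks along morphisms of `S` and
the only downward closed full subcategory containing it is the whole category. -/
structure IsGenerating {S : MorphismProperty C} (hS : Marking S) (P : C → Prop) : Prop where
  pullback_mem : ∀ {A B X : C} (s : A ⟶ X) (g : B ⟶ X) (hs : S s),
    P A → P B → P X →
    letI := hS.hasPullback s g hs
    P (pullback s g)
  generates : ∀ Q : C → Prop, DownwardClosed hS Q → (∀ X, P X → Q X) → ∀ X, Q X

/-- The canonical comparison map `F(D ×_X E) ⟶ F(D) ×_{F(X)} F(E)` for a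
`Type`-valued functor `F`. -/
noncomputable def comparisonMap (F : C ⥤ Type w) {D E X : C} (t : D ⟶ X) (g : E ⟶ X)
    [hpb : HasPullback t g] (z : F.obj (pullback t g)) :
    { p : F.obj D × F.obj E // F.map t p.1 = F.map g p.2 } :=
  ⟨(F.map (pullback.fst t g) z, F.map (pullback.snd t g) z), by
    rw [← FunctorToTypes.map_comp_apply, ← FunctorToTypes.map_comp_apply,
      pullback.condition]⟩

/-- A functor `F : C ⥤ Type` is an `S`-cosheaf if for every `s : C₀ ⟶ X` in `S`
the diagram `F(C₀ ×_X C₀) ⇉ F(C₀) ⟶ F(X)` is a coequalizer. -/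
def IsCosheaf {S : MorphismProperty C} (hS : Marking S) (F : C ⥤ Type w) : Prop :=
  ∀ {C₀ X : C} (s : C₀ ⟶ X) (hs : S s),
    letI := hS.hasPullback s s hs
    Nonempty (IsColimit (Cofork.ofπ
      (f := F.map (pullback.fst s s)) (g := F.map (pullback.snd s s)) (F.map s)
      (by rw [← F.map_comp, ← F.map_comp, pullback.condition])))

/-- A functor `F : C ⥤ Type` is `T`-adapted if it commutes with pullbacks along
morphisms of `T`. -/
def IsAdapted {T : MorphismProperty C} (hT : Marking T) (F : C ⥤ Type w) : Prop :=
  ∀ {D E X : C} (t : D ⟶ X) (ht : T t) (g : E ⟶ X),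
    Function.Bijective (comparisonMap F t g (hpb := hT.hasPullback t g ht))

/-- The naturality square of `α : F ⟶ G` at `t : D ⟶ X` is a pullback square of types. -/
def SquareCartesian {F G : C ⥤ Type w} (α : F ⟶ G) {D X : C} (t : D ⟶ X) : Prop :=
  Function.Bijective (fun z : F.obj D =>
    (⟨(F.map t z, α.app D z), (NatTrans.naturality_apply α t z)⟩ :
      { p : F.obj X × G.obj D // α.app X p.1 = G.map t p.2 }))

/-- A natural transformation `α : F ⟶ G` is `T`-cartesian if all its naturality
squares at morphisms of `T` are pullback squares. -/
def IsCartesianNatTrans (T : MorphismProperty C) {F G : C ⥤ Type w} (α : F ⟶ G) : Prop :=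
  ∀ {D X : C} (t : D ⟶ X), T t → SquareCartesian α t

/-! Write `E₁ = E₀ ×_E E₀` and `V(E') = F(D) ×_{F(X)} F(E')`. As `F` is an `S`-cosheaf,
`F(E₁) ⇉ F(E₀) ⟶ F(E)` is a coequalizer of types; coequalizers of types are stable under
base change, so `V(E₁) ⇉ V(E₀) ⟶ V(E)` is a coequalizer as well. The comparison maps form a map
into it from the fork `F(D ×_X E₁) ⇉ F(D ×_X E₀) ⟶ F(D ×_X E)`, whose last map is surjective
because `D ×_X E₀ ⟶ D ×_X E` is a base change of `e`. A map from such a fork to a coequalizer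
which is bijective at `E₀` and surjective at `E₁` is bijective at `E`. -/

/-- `π` is a coequalizer of `a` and `b` in the category of types (see `of_isColimit`). -/
structure Function.IsCoequalizer {A B Q : Type*} (a b : A → B) (π : B → Q) : Prop where
  condition : ∀ w, π (a w) = π (b w)
  surjective : Function.Surjective π
  eqvGen_of_eq : ∀ ⦃x y : B⦄, π x = π y → Relation.EqvGen (Function.Coequalizer.Rel a b) x y

def Function.Pullback.mapSnd {Y Z B B' : Type*} {k : Y → Z} {h' : B' → Z} {h : B → Z}
    (φ : B' → B) (hφ : ∀ x, h' x = h (φ x)) (p : k.Pullback h') : k.Pullback h :=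
  ⟨(p.1.1, φ p.1.2), p.2.trans (hφ _)⟩

namespace Function.IsCoequalizer

variable {A B Q : Type*} {a b : A → B} {π : B → Q}

theorem eq_of_eq {Z : Type*} (hπ : IsCoequalizer a b π) {φ : B → Z}
    (hφ : ∀ w, φ (a w) = φ (b w)) {x y : B} (hxy : π x = π y) : φ x = φ y :=
  congrArg (Coequalizer.desc a b φ (funext hφ)) (Quot.eqvGen_sound (hπ.eqvGen_of_eq hxy))

theorem pullback {Y Z : Type*} (hπ : IsCoequalizer a b π) (k : Y → Z) {h₁ : A → Z}
    {h₀ : B → Z} {h : Q → Z} (ha : ∀ w, h₁ w = h₀ (a w)) (hb : ∀ w, h₁ w = h₀ (b w))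
    (hq : ∀ x, h₀ x = h (π x)) :
    IsCoequalizer (Pullback.mapSnd (k := k) a ha) (Pullback.mapSnd b hb)
      (Pullback.mapSnd π hq) where
  condition w := Subtype.ext (Prod.ext rfl (hπ.condition _))
  surjective := by
    rintro ⟨⟨y, q⟩, hyq⟩
    obtain ⟨x, rfl⟩ := hπ.surjective q
    exact ⟨⟨(y, x), hyq.trans (hq x).symm⟩, rfl⟩
  eqvGen_of_eq := by
    rintro ⟨⟨y, x⟩, hx⟩ ⟨⟨y', x'⟩, hx'⟩ hxx'
    obtain ⟨rfl : y = y', hπx : π x = π x'⟩ := Prod.ext_iff.mp (congrArg Subtype.val hxx')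
    let R := Coequalizer.Rel (Pullback.mapSnd (k := k) a ha) (Pullback.mapSnd b hb)
    -- `P x'` says that `⟨y, x'⟩` lies in the class of `⟨y, x⟩`; it is invariant under the
    -- relation generated by `a, b`, hence constant on the fibres of `π`.
    let P (x' : B) : Prop := ∀ hx' : k y = h₀ x', Relation.EqvGen R ⟨(y, x), hx⟩ ⟨(y, x'), hx'⟩
    have hP : ∀ w, P (a w) = P (b w) := by
      intro w
      have step (hw : k y = h₁ w) : Relation.EqvGen R ⟨(y, a w), hw.trans (ha w)⟩
          ⟨(y, b w), hw.trans (hb w)⟩ := .rel _ _ (.intro (⟨(y, w), hw⟩ : k.Pullback h₁))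
      refine propext ⟨fun H hbw => ?_, fun H haw => ?_⟩
      · have hw := hbw.trans (hb w).symm
        exact (H (hw.trans (ha w))).trans _ _ _ (step hw)
      · have hw := haw.trans (ha w).symm
        exact (H (hw.trans (hb w))).trans _ _ _ (.symm _ _ (step hw))
    exact (hπ.eq_of_eq hP hπx).mp (fun _ => .refl _) hx'

theorem bijective_of_bijective_of_surjective {U₁ U₀ U : Type*} {a' b' : U₁ → U₀} {π' : U₀ → U}
    (hπ : IsCoequalizer a b π) (hπ' : ∀ w, π' (a' w) = π' (b' w)) (hπ'_surj : Surjective π')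
    {α₁ : U₁ → A} {α₀ : U₀ → B} {α : U → Q} (hα₁ : Surjective α₁) (hα₀ : Bijective α₀)
    (ha : ∀ w, α₀ (a' w) = a (α₁ w)) (hb : ∀ w, α₀ (b' w) = b (α₁ w))
    (hα : ∀ x, α (π' x) = π (α₀ x)) : Bijective α := by
  refine ⟨?_, ?_⟩
  · intro u v huv
    obtain ⟨x, rfl⟩ := hπ'_surj u
    obtain ⟨y, rfl⟩ := hπ'_surj v
    let α₀' := Equiv.ofBijective α₀ hα₀
    have hφ : ∀ w, π' (α₀'.symm (a w)) = π' (α₀'.symm (b w)) := by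
      intro w
      obtain ⟨w, rfl⟩ := hα₁ w
      rw [← ha, ← hb]
      simpa [α₀'] using hπ' w
    have hxy : π (α₀ x) = π (α₀ y) := by rw [← hα, ← hα, huv]
    simpa [α₀'] using hπ.eq_of_eq (φ := π' ∘ α₀'.symm) hφ hxy
  · intro q
    obtain ⟨x, rfl⟩ := hπ.surjective q
    obtain ⟨x, rfl⟩ := hα₀.2 x
    exact ⟨π' x, hα x⟩

end Function.IsCoequalizer

open Function in
theorem Function.IsCoequalizer.of_isColimit {A B Q : Type w} {a b : A ⟶ B} {π : B ⟶ Q}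
    {w : a ≫ π = b ≫ π} (hc : IsColimit (Cofork.ofπ π w)) : IsCoequalizer a b π where
  condition x := congrFun (congrArg (⇑) w) x
  surjective := (epi_iff_surjective π).mp (Cofork.IsColimit.epi hc)
  eqvGen_of_eq x y hxy := by
    let U : Set B := {y | Relation.EqvGen (Coequalizer.Rel a b) x y}
    have hU : a ⁻¹' U = b ⁻¹' U := Set.ext fun z =>
      ⟨fun h => h.trans _ _ _ (.rel _ _ (.intro z)),
        fun h => h.trans _ _ _ (.symm _ _ (.rel _ _ (.intro z)))⟩
    have := Types.coequalizer_preimage_image_eq_of_preimage_eq a b π w hc U hU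
    exact this.subset ⟨x, .refl x, hxy⟩

section

variable {D E E' X : C}

noncomputable def pullbackMapSnd (t : D ⟶ X) {f : E ⟶ X} {f' : E' ⟶ X} (k : E' ⟶ E)
    (hk : k ≫ f = f') [HasPullback t f] [HasPullback t f'] : pullback t f' ⟶ pullback t f :=
  pullback.lift (pullback.fst t f') (pullback.snd t f' ≫ k)
    (by rw [pullback.condition, Category.assoc, hk])

variable (t : D ⟶ X) {f : E ⟶ X} {f' : E' ⟶ X} (k : E' ⟶ E) (hk : k ≫ f = f')
  [HasPullback t f] [HasPullback t f']

@[simp]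
theorem pullbackMapSnd_fst : pullbackMapSnd t k hk ≫ pullback.fst t f = pullback.fst t f' :=
  pullback.lift_fst _ _ _

@[simp]
theorem pullbackMapSnd_snd :
    pullbackMapSnd t k hk ≫ pullback.snd t f = pullback.snd t f' ≫ k :=
  pullback.lift_snd _ _ _

theorem pullbackMapSnd_comp_eq_of_comp_eq {E'' : C} {f'' : E'' ⟶ X} [HasPullback t f'']
    {k₁ k₂ : E'' ⟶ E'} (hk₁ : k₁ ≫ f' = f'') (hk₂ : k₂ ≫ f' = f'') (h : k₁ ≫ k = k₂ ≫ k) :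
    pullbackMapSnd t k₁ hk₁ ≫ pullbackMapSnd t k hk =
      pullbackMapSnd t k₂ hk₂ ≫ pullbackMapSnd t k hk := by
  apply pullback.hom_ext
  · rw [Category.assoc, Category.assoc, pullbackMapSnd_fst, pullbackMapSnd_fst,
      pullbackMapSnd_fst]
  · rw [Category.assoc, Category.assoc, pullbackMapSnd_snd, ← Category.assoc,
      ← Category.assoc, pullbackMapSnd_snd, pullbackMapSnd_snd, Category.assoc,
      Category.assoc, h]

theorem comparisonMap_map_pullbackMapSnd (F : C ⥤ Type w) (z : F.obj (pullback t f')) :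
    comparisonMap F t f (F.map (pullbackMapSnd t k hk) z) =
      Function.Pullback.mapSnd (F.map k) (fun x => by rw [← hk, Functor.map_comp_apply])
        (comparisonMap F t f' z) := by
  ext
  · change F.map (pullback.fst t f) (F.map _ z) = F.map (pullback.fst t f') z
    rw [← Functor.map_comp_apply, pullbackMapSnd_fst]
  · change F.map (pullback.snd t f) (F.map _ z) = F.map k (F.map (pullback.snd t f') z)
    rw [← Functor.map_comp_apply, ← Functor.map_comp_apply, pullbackMapSnd_snd]

end

theorem IsCosheaf.isCoequalizer {S : MorphismProperty C} {hS : Marking S} {F : C ⥤ Type w}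
    (hF : IsCosheaf hS F) {C₀ X : C} {s : C₀ ⟶ X} (hs : S s) :
    letI := hS.hasPullback s s hs
    Function.IsCoequalizer (F.map (pullback.fst s s)) (F.map (pullback.snd s s)) (F.map s) :=
  .of_isColimit (hF s hs).some

theorem IsCosheaf.surjective_map_pullbackMapSnd {S : MorphismProperty C} {hS : Marking S}
    {F : C ⥤ Type w} (hF : IsCosheaf hS F) {D E E' X : C} (t : D ⟶ X) (f : E ⟶ X)
    {k : E' ⟶ E} (hk : S k) [HasPullback t f] [HasPullback t (k ≫ f)] :
    Function.Surjective (F.map (pullbackMapSnd (f := f) t k rfl)) := by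
  have := hS.hasPullback k (pullback.snd t f) hk
  let r : pullback k (pullback.snd t f) ⟶ pullback t (k ≫ f) :=
    pullback.lift (pullback.snd _ _ ≫ pullback.fst t f) (pullback.fst _ _)
      (by rw [Category.assoc, pullback.condition, ← Category.assoc, ← pullback.condition,
        Category.assoc])
  have hr : r ≫ pullbackMapSnd (f := f) t k rfl = pullback.snd k (pullback.snd t f) := by
    apply pullback.hom_ext
    · rw [Category.assoc, pullbackMapSnd_fst, pullback.lift_fst]
    · rw [Category.assoc, pullbackMapSnd_snd, ← Category.assoc, pullback.lift_snd,
        pullback.condition]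
  intro z
  obtain ⟨y, rfl⟩ := (hF.isCoequalizer (hS.snd_mem k (pullback.snd t f) hk)).surjective z
  exact ⟨F.map r y, by rw [← Functor.map_comp_apply, hr]⟩

theorem comparison_bijective_of_fibrePowers_general
    {C : Type u} [Category.{v} C] {S T : MorphismProperty C}
    (hS : Marking S) (hT : Marking T)
    (F : C ⥤ Type w) (hF : IsCosheaf hS F)
    {X D : C} (g : D ⟶ X) (hg : T g)
    {E₀ E : C} (e : E₀ ⟶ E) (he : S e) (pE : E ⟶ X)
    (h : ∀ n : ℕ,
      Function.Bijective (comparisonMap F g (hS.fibrePowerHom e he n ≫ pE)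
        (hpb := hT.hasPullback g (hS.fibrePowerHom e he n ≫ pE) hg))) :
    Function.Bijective (comparisonMap F g pE (hpb := hT.hasPullback g pE hg)) := by
  have := hS.hasPullback e e he
  have := hT.hasPullback g pE hg
  have := hT.hasPullback g (e ≫ pE) hg
  have := hT.hasPullback g ((pullback.snd e e ≫ e) ≫ pE) hg
  have hfst : pullback.fst e e ≫ e ≫ pE = (pullback.snd e e ≫ e) ≫ pE := by
    rw [← Category.assoc, pullback.condition]
  have hsnd : pullback.snd e e ≫ e ≫ pE = (pullback.snd e e ≫ e) ≫ pE :=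
    (Category.assoc _ _ _).symm
  refine ((hF.isCoequalizer he).pullback (F.map g) _ _ _).bijective_of_bijective_of_surjective
    (a' := F.map (pullbackMapSnd g (pullback.fst e e) hfst))
    (b' := F.map (pullbackMapSnd g (pullback.snd e e) hsnd))
    (π' := F.map (pullbackMapSnd g e rfl)) ?_ (hF.surjective_map_pullbackMapSnd g pE he)
    (h 1).2 (h 0) (comparisonMap_map_pullbackMapSnd g _ hfst F)
    (comparisonMap_map_pullbackMapSnd g _ hsnd F) (comparisonMap_map_pullbackMapSnd g e rfl F)
  intro w
  rw [← Functor.map_comp_apply, ← Functor.map_comp_apply,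
    pullbackMapSnd_comp_eq_of_comp_eq _ _ _ hfst hsnd pullback.condition]

/-- Let `S ⊆ T` be markings, `F` an `S`-cosheaf, `g : D ⟶ X` a
morphism of `T` and `e : E₀ ⟶ E` a morphism of `S` over `X` (via `pE : E ⟶ X`).
If for every `n` the comparison map `F(Eₙ ×_X D) ⟶ F(Eₙ) ×_{F(X)} F(D)` at the
`(n+1)`-fold fibre power `Eₙ = E₀ ×_E ⋯ ×_E E₀` is bijective, then so is the
comparison map `F(E ×_X D) ⟶ F(E) ×_{F(X)} F(D)`: the full subcategory of
`C_{/X}` of objects for which `F` commutes with the pullback against `g` is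
downward closed. -/
theorem comparison_bijective_of_fibrePowers
    {C : Type u} [Category.{v} C] {S T : MorphismProperty C}
    (hS : Marking S) (hT : Marking T) (hST : ∀ {X Y : C} (f : X ⟶ Y), S f → T f)
    (F : C ⥤ Type w) (hF : IsCosheaf hS F)
    {X D : C} (g : D ⟶ X) (hg : T g)
    {E₀ E : C} (e : E₀ ⟶ E) (he : S e) (pE : E ⟶ X)
    (h : ∀ n : ℕ,
      Function.Bijective (comparisonMap F g (hS.fibrePowerHom e he n ≫ pE)
        (hpb := hT.hasPullback g (hS.fibrePowerHom e he n ≫ pE) hg))) :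
    Function.Bijective (comparisonMap F g pE (hpb := hT.hasPullback g pE hg)) :=
  comparison_bijective_of_fibrePowers_general hS hT F hF g hg e he pE h
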